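/- Let F_q be a finite field and let 0 ≤ r_1 ≤ d_1 ≤ d_2 and r_2 ≥ 0. Then C_q(d_2, r_2, d_1, r_1) ≠ 0 if and only if r_2 ≤ d_2 and r_1 ≤ r_2 ≤ r_1 + 2(d_2 − d_1). -/

import Mathlib

/-!
Restricting a form on `F^{d₂}` to `F^{d₁}` deletes `d₂ - d₁` rows and `d₂ - d₁` columns of its
Gram matrix, and deleting a row or a column lowers the rank by at most one; this gives
`r₁ ≤ r₂ ≤ r₁ + 2(d₂ - d₁)`. Conversely, writing `r₂ = r₁ + t + m` with `t ≤ m ≤ d₂ - d₁` and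
`r₁ + t ≤ d₁`, the extension of `x₀² + ⋯ + x_{r₁-1}²` by `t` hyperbolic planes pairing
`x_{r₁+k}` with a new coordinate `y_k`, plus the squares `y_k²` for `t ≤ k < m`, has rank `r₂`:
its Gram matrix is the matrix of a self-inverse partial permutation, whose rank is the size of
its domain.
-/

/-- The standard symmetric bilinear form of rank `r` on `K^d` (for `r ≤ d`): the
diagonal matrix with `r` ones followed by zeros. -/
def stdForm (K : Type) [Field K] (d r : ℕ) : Matrix (Fin d) (Fin d) K :=
  Matrix.diagonal fun i => if (i : ℕ) < r then 1 else 0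

/-- `C_q(d₂, r₂, d₁, r₁)`: the number of symmetric bilinear forms on `F_q^{d₂}` of rank
`r₂` whose restriction to `F_q^{d₁}` (embedded as the span of the first `d₁` standard
basis vectors) is a fixed symmetric bilinear form of rank `r₁` — this number does not
depend on the choice of the fixed form, so we use the standard one — with the
convention that `C_q(d₂, r₂, d₁, r₁) = 0` when `r₁ > d₁` (or `d₁ > d₂`). -/
noncomputable def C (K : Type) [Field K] [Fintype K] (d₂ r₂ d₁ r₁ : ℕ) : ℕ :=
  if h : d₁ ≤ d₂ ∧ r₁ ≤ d₁ then
    Nat.card {M : Matrix (Fin d₂) (Fin d₂) K //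
      M.IsSymm ∧ M.rank = r₂ ∧
      M.submatrix (Fin.castLE h.1) (Fin.castLE h.1) = stdForm K d₁ r₁}
  else 0

open Matrix Module Submodule

namespace Matrix

variable {K m n m₀ n₀ : Type*} [Field K] [Fintype m] [Fintype n] [Fintype m₀] [Fintype n₀]

theorem rank_le_rank_submatrix_id_add (A : Matrix m n K) (c : n₀ → n) :
    A.rank ≤ (A.submatrix id c).rank + Nat.card ↥(Set.range c)ᶜ := by
  classical
  rw [rank_eq_finrank_span_cols, rank_eq_finrank_span_cols, Nat.card_eq_fintype_card]
  set rest : ↥(Set.range c)ᶜ → m → K := fun j => A.col j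
  calc finrank K (span K (Set.range A.col))
      ≤ finrank K ↥(span K (Set.range (A.submatrix id c).col) ⊔ span K (Set.range rest)) := by
        refine finrank_mono (span_le.2 ?_)
        rintro _ ⟨j, rfl⟩
        by_cases hj : j ∈ Set.range c
        · obtain ⟨k, rfl⟩ := hj
          exact mem_sup_left (subset_span ⟨k, rfl⟩)
        · exact mem_sup_right (subset_span ⟨⟨j, hj⟩, rfl⟩)
    _ ≤ _ := finrank_add_le_finrank_add_finrank _ _
    _ ≤ _ := by gcongr; exact finrank_range_le_card rest

theorem rank_le_rank_submatrix_add (A : Matrix m n K) (r : m₀ → m) (c : n₀ → n) :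
    A.rank ≤ (A.submatrix r c).rank + Nat.card ↥(Set.range r)ᶜ + Nat.card ↥(Set.range c)ᶜ := by
  have hrows := rank_le_rank_submatrix_id_add (A.submatrix id c)ᵀ r
  rw [rank_transpose, transpose_submatrix, submatrix_submatrix, Function.comp_id,
    Function.id_comp, ← transpose_submatrix, rank_transpose] at hrows
  have := rank_le_rank_submatrix_id_add A c
  omega

theorem rank_diagonal_ite [DecidableEq n] (p : n → Prop) [DecidablePred p] :
    (diagonal fun i => if p i then (1 : K) else 0).rank = Fintype.card {i // p i} := by
  classical
  rw [rank_diagonal]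
  exact Fintype.card_congr (Equiv.subtypeEquivRight fun i => by split_ifs <;> simp [*])

end Matrix

namespace PEquiv

variable {K m n : Type*} [Field K] [DecidableEq m] [DecidableEq n]

theorem toMatrix_ofSet (s : Set m) [DecidablePred (· ∈ s)] :
    ((ofSet s).toMatrix : Matrix m m K) = diagonal fun i => if i ∈ s then 1 else 0 := by
  ext i j
  by_cases hi : i ∈ s <;> by_cases hij : i = j <;> simp [ofSet, diagonal, hi, hij]

theorem rank_toMatrix [Fintype m] [Fintype n] (f : m ≃. n) :
    (f.toMatrix : Matrix m n K).rank = Fintype.card {a // (f a).isSome} := by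
  classical
  refine le_antisymm ?_ ?_
  · rw [Fintype.card_subtype]
    refine rank_le_card_of_support_subset _ _ fun i hi => ?_
    by_contra hs
    exact hi (funext fun j => by simp_all)
  · calc Fintype.card {a // (f a).isSome}
        = ((ofSet {a | (f a).isSome}).toMatrix : Matrix m m K).rank := by
          rw [toMatrix_ofSet, rank_diagonal_ite]; rfl
      _ = ((f.toMatrix : Matrix m n K) * (f.symm.toMatrix : Matrix n m K)).rank := by
          rw [← toMatrix_trans, self_trans_symm]
      _ ≤ _ := rank_mul_le_left _ _

end PEquiv

theorem Fin.card_subtype_val {d : ℕ} (p : ℕ → Prop) [DecidablePred p] :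
    Fintype.card {i : Fin d // p i} = ((Finset.Iio d).filter p).card := by
  rw [Fintype.card_subtype, ← Finset.card_map Fin.valEmbedding, ← Fin.map_valEmbedding_univ,
    Finset.filter_map]
  rfl

theorem Fin.card_compl_range_castLE {d₁ d₂ : ℕ} (hd : d₁ ≤ d₂) :
    Nat.card ↥(Set.range (Fin.castLE hd))ᶜ = d₂ - d₁ := by
  rw [Nat.card_coe_set_eq, Set.ncard_compl, Set.ncard_range_of_injective (Fin.castLE_injective hd),
    Nat.card_fin, Nat.card_fin]

section Matching

variable {d d₁ r t m : ℕ}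

def extensionPartner (d₁ r t m : ℕ) (hrt : r + t ≤ d₁) (htm : t ≤ m) (hm : d₁ + m ≤ d)
    (i : Fin d) : Option (Fin d) :=
  if h₀ : (i : ℕ) < r then some i
  else if h₁ : (i : ℕ) < r + t then some ⟨i - r + d₁, by omega⟩
  else if (i : ℕ) < d₁ then none
  else if h₂ : (i : ℕ) < d₁ + t then some ⟨i - d₁ + r, by omega⟩
  else if (i : ℕ) < d₁ + m then some i
  else none

theorem extensionPartner_symm (hrt : r + t ≤ d₁) (htm : t ≤ m) (hm : d₁ + m ≤ d) (i j : Fin d) :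
    i ∈ extensionPartner d₁ r t m hrt htm hm j ↔ j ∈ extensionPartner d₁ r t m hrt htm hm i := by
  have := i.2; have := j.2
  simp only [extensionPartner]
  split_ifs <;> simp [Fin.ext_iff] <;> omega

def extensionMatching (d₁ r t m : ℕ) (hrt : r + t ≤ d₁) (htm : t ≤ m) (hm : d₁ + m ≤ d) :
    Fin d ≃. Fin d where
  toFun := extensionPartner d₁ r t m hrt htm hm
  invFun := extensionPartner d₁ r t m hrt htm hm
  inv := extensionPartner_symm hrt htm hm

theorem extensionMatching_symm (hrt : r + t ≤ d₁) (htm : t ≤ m) (hm : d₁ + m ≤ d) :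
    (extensionMatching d₁ r t m hrt htm hm).symm = extensionMatching d₁ r t m hrt htm hm :=
  rfl

theorem card_isSome_extensionMatching (hrt : r + t ≤ d₁) (htm : t ≤ m) (hm : d₁ + m ≤ d) :
    Fintype.card {i // (extensionMatching d₁ r t m hrt htm hm i).isSome} = r + t + m := by
  have hdom : ∀ i : Fin d, (extensionMatching d₁ r t m hrt htm hm i).isSome ↔
      ((i : ℕ) < r + t ∨ d₁ ≤ i ∧ i < d₁ + m) := by
    intro i
    simp only [extensionMatching, PEquiv.coe_mk, extensionPartner]
    split_ifs <;> simp <;> omega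
  rw [Fintype.card_congr (Equiv.subtypeEquivRight hdom),
    Fin.card_subtype_val fun i => i < r + t ∨ d₁ ≤ i ∧ i < d₁ + m,
    show (Finset.Iio d).filter (fun i => i < r + t ∨ d₁ ≤ i ∧ i < d₁ + m) =
      Finset.Iio (r + t) ∪ Finset.Ico d₁ (d₁ + m) by ext; simp; omega,
    Finset.card_union_of_disjoint (Finset.disjoint_left.2 fun i => by simp; omega),
    Nat.card_Iio, Nat.card_Ico]
  omega

theorem submatrix_toMatrix_extensionMatching {K : Type} [Field K] (hrt : r + t ≤ d₁) (htm : t ≤ m)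
    (hm : d₁ + m ≤ d) (hd : d₁ ≤ d) :
    ((extensionMatching d₁ r t m hrt htm hm).toMatrix : Matrix (Fin d) (Fin d) K).submatrix
      (Fin.castLE hd) (Fin.castLE hd) = stdForm K d₁ r := by
  ext i j
  have := i.2; have := j.2
  simp only [Matrix.submatrix_apply, PEquiv.toMatrix_apply, extensionMatching, PEquiv.coe_mk,
    extensionPartner, stdForm, Matrix.diagonal_apply, Fin.val_castLE]
  split_ifs <;> simp_all [Fin.ext_iff] <;> omega

end Matching

section Extension

variable {K : Type} [Field K]

theorem rank_stdForm {d r : ℕ} (h : r ≤ d) : (stdForm K d r).rank = r := by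
  rw [stdForm, rank_diagonal_ite, Fintype.card_fin_lt_of_le h]

theorem rank_bounds_of_submatrix_castLE_eq_stdForm {d₁ d₂ r : ℕ} (hr : r ≤ d₁) (hd : d₁ ≤ d₂)
    {M : Matrix (Fin d₂) (Fin d₂) K}
    (hM : M.submatrix (Fin.castLE hd) (Fin.castLE hd) = stdForm K d₁ r) :
    r ≤ M.rank ∧ M.rank ≤ r + 2 * (d₂ - d₁) := by
  have hsub : (M.submatrix (Fin.castLE hd) (Fin.castLE hd)).rank = r := by rw [hM, rank_stdForm hr]
  refine ⟨hsub ▸ rank_submatrix_le _ _ _, ?_⟩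
  have := M.rank_le_rank_submatrix_add (Fin.castLE hd) (Fin.castLE hd)
  rw [hsub, Fin.card_compl_range_castLE] at this
  omega

theorem exists_isSymm_rank_eq_submatrix_castLE_eq_stdForm {d₁ d₂ r₁ r₂ : ℕ} (hr : r₁ ≤ d₁)
    (hd : d₁ ≤ d₂) (h₂ : r₂ ≤ d₂) (h₁₂ : r₁ ≤ r₂) (h₂₁ : r₂ ≤ r₁ + 2 * (d₂ - d₁)) :
    ∃ M : Matrix (Fin d₂) (Fin d₂) K, M.IsSymm ∧ M.rank = r₂ ∧
      M.submatrix (Fin.castLE hd) (Fin.castLE hd) = stdForm K d₁ r₁ := by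
  set m := min (r₂ - r₁) (d₂ - d₁)
  set t := r₂ - r₁ - m
  have hrt : r₁ + t ≤ d₁ := by omega
  have htm : t ≤ m := by omega
  have hm : d₁ + m ≤ d₂ := by omega
  set f := extensionMatching d₁ r₁ t m hrt htm hm
  refine ⟨f.toMatrix, ?_, ?_, submatrix_toMatrix_extensionMatching hrt htm hm hd⟩
  · rw [IsSymm, ← PEquiv.toMatrix_symm, extensionMatching_symm]
  · rw [PEquiv.rank_toMatrix, card_isSome_extensionMatching]
    omega

end Extension

/-- For `0 ≤ r₁ ≤ d₁ ≤ d₂` and `r₂ ≥ 0`, the extension count `C_q(d₂, r₂, d₁, r₁)` is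
nonzero if and only if `r₂ ≤ d₂` and `r₁ ≤ r₂ ≤ r₁ + 2(d₂ - d₁)`. -/
theorem stmt_10 (K : Type) [Field K] [Fintype K] (d₁ d₂ r₁ r₂ : ℕ)
    (hr : r₁ ≤ d₁) (hd : d₁ ≤ d₂) :
    C K d₂ r₂ d₁ r₁ ≠ 0 ↔ r₂ ≤ d₂ ∧ r₁ ≤ r₂ ∧ r₂ ≤ r₁ + 2 * (d₂ - d₁) := by
  rw [C, dif_pos ⟨hd, hr⟩, Nat.card_ne_zero, and_iff_left Subtype.finite]
  constructor
  · rintro ⟨M, -, rfl, hM⟩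
    exact ⟨M.rank_le_width, rank_bounds_of_submatrix_castLE_eq_stdForm hr hd hM⟩
  · rintro ⟨h₂, h₁₂, h₂₁⟩
    exact nonempty_subtype.2 (exists_isSymm_rank_eq_submatrix_castLE_eq_stdForm hr hd h₂ h₁₂ h₂₁)
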